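/- arXiv:2202.08888 — 2 statements merged into one kernel-verified Lean document; each statement's English description precedes it below -/
import Mathlib

section
/- Let J be a finite subset of a linearly ordered type, let J' ⊆ J, and let i ∈ J with i ∉ J'. Set J'' := J' ∪ {i}. Then (∏_{j ∈ J'} (−1)^{|J|} · sgn(j, J)) · (∏_{j ∈ J'} (−1)^{|J|−1} · sgn(j, J \ {i})) = sgn(i, J''). Since every factor is ±1, this product form is equivalent to the quotient form (∏_{j∈J'} (−1)^{|J|} sgn(j,J)) / (∏_{j∈J'} (−1)^{|J|−1} sgn(j, J∖{i})) = sgn(i, J''). -/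
/-- For a finite subset `J` of a linearly ordered type and `i : α`, the sign
`sgn i J := (-1)^(number of elements of J smaller than i)`, as an integer. -/
def sgn {α : Type*} [LinearOrder α] (i : α) (J : Finset α) : ℤ :=
  (-1) ^ (J.filter (fun j => j < i)).card

/-- Second identity of the paper's Lemma "parity" (Section 4), in product form:
for `J' ⊆ J`, `i ∈ J`, `i ∉ J'` and `J'' = J' ∪ {i}`,
`(∏_{j ∈ J'} (−1)^{|J|} sgn(j, J)) · (∏_{j ∈ J'} (−1)^{|J|−1} sgn(j, J∖{i})) = sgn(i, J'')`. -/
theorem parity_second {α : Type*} [LinearOrder α] (J J' : Finset α)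
    (hsub : J' ⊆ J) (i : α) (hiJ : i ∈ J) (hiJ' : i ∉ J') :
    (∏ j ∈ J', ((-1 : ℤ) ^ J.card * sgn j J)) *
      (∏ j ∈ J', ((-1 : ℤ) ^ (J.card - 1) * sgn j (J \ {i}))) =
      sgn i (insert i J') := by
  rw [← Finset.prod_mul_distrib]
  have hn : 1 ≤ J.card := Finset.card_pos.mpr ⟨i, hiJ⟩
  have key : ∀ j ∈ J', ((-1 : ℤ) ^ J.card * sgn j J) *
      ((-1 : ℤ) ^ (J.card - 1) * sgn j (J \ {i})) =
      if j < i then -1 else 1 := by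
    intro j hj
    have hji : j ≠ i := fun h => hiJ' (h ▸ hj)
    have hfilter : (J \ {i}).filter (fun k => k < j) =
        (J.filter (fun k => k < j)).erase i := by
      ext k
      simp [Finset.mem_erase, Finset.mem_filter, Finset.mem_sdiff]
      tauto
    unfold sgn
    rw [hfilter]
    set a := (J.filter (fun k => k < j)).card with ha
    set n := J.card with hN
    by_cases h : i < j
    · have hi_mem : i ∈ J.filter (fun k => k < j) := Finset.mem_filter.mpr ⟨hiJ, h⟩
      have ha1 : 1 ≤ a := Finset.card_pos.mpr ⟨i, hi_mem⟩
      rw [Finset.card_erase_of_mem hi_mem]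
      rw [if_neg (fun hji' => absurd h (not_lt.mpr hji'.le))]
      rw [mul_mul_mul_comm, ← pow_add, ← pow_add, ← pow_add]
      apply Even.neg_one_pow
      rw [Nat.even_iff] at *
      omega
    · have hi_nmem : i ∉ J.filter (fun k => k < j) := by
        simp only [Finset.mem_filter]; tauto
      rw [Finset.erase_eq_of_notMem hi_nmem]
      have hji' : j < i := lt_of_le_of_ne (not_lt.mp h) hji
      rw [if_pos hji']
      rw [mul_mul_mul_comm, ← pow_add, ← pow_add, ← pow_add]
      apply Odd.neg_one_pow
      rw [Nat.odd_iff]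
      omega
  rw [Finset.prod_congr rfl key]
  unfold sgn
  rw [Finset.filter_insert, if_neg (lt_irrefl i)]
  rw [Finset.prod_ite, Finset.prod_const, Finset.prod_const, one_pow, mul_one]
end

section
/- Let J be a finite subset of a linearly ordered type, let J' ⊆ J, and let i ∈ J with i ∉ J'. Set J'' := J' ∪ {i}. Then (∏_{j ∈ J'} (−1)^{|J|−1} · sgn(j, J \ {i})) · (∏_{j ∈ J''} (−1)^{|J|} · sgn(j, J)) = (−1)^{|J|} · sgn(i, J \ J'). Since every factor is ±1, this is equivalent to the quotient form (∏_{j∈J'} (−1)^{|J|−1} sgn(j, J∖{i})) / (∏_{j∈J''} (−1)^{|J|} sgn(j, J)) = (−1)^{|J|} · sgn(i, J \ J'). -/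
private lemma negpow_congr (a b : ℕ) (h : a % 2 = b % 2) : ((-1 : ℤ)) ^ a = (-1) ^ b := by
  rw [← Nat.div_add_mod a 2, ← Nat.div_add_mod b 2, h, pow_add, pow_add, pow_mul, pow_mul]
  norm_num

/-- Third identity of the paper's Lemma "parity" (Section 4), in product form:
for `J' ⊆ J`, `i ∈ J`, `i ∉ J'` and `J'' = J' ∪ {i}`,
`(∏_{j ∈ J'} (−1)^{|J|−1} sgn(j, J∖{i})) · (∏_{j ∈ J''} (−1)^{|J|} sgn(j, J))
  = (−1)^{|J|} · sgn(i, J \ J')`. -/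
theorem parity_third {α : Type*} [LinearOrder α] (J J' : Finset α)
    (hsub : J' ⊆ J) (i : α) (hiJ : i ∈ J) (hiJ' : i ∉ J') :
    (∏ j ∈ J', ((-1 : ℤ) ^ (J.card - 1) * sgn j (J \ {i}))) *
      (∏ j ∈ insert i J', ((-1 : ℤ) ^ J.card * sgn j J)) =
      (-1 : ℤ) ^ J.card * sgn i (J \ J') := by
  classical
  have hcard : 1 ≤ J.card := Finset.card_pos.mpr ⟨i, hiJ⟩
  have h1 : (∏ j ∈ J', ((-1 : ℤ) ^ (J.card - 1) * sgn j (J \ {i}))) *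
      (∏ j ∈ insert i J', ((-1 : ℤ) ^ J.card * sgn j J)) =
      (∏ j ∈ J', ((-1 : ℤ) ^ (J.card - 1) * sgn j (J \ {i}) *
        ((-1 : ℤ) ^ J.card * sgn j J))) * ((-1 : ℤ) ^ J.card * sgn i J) := by
    rw [Finset.prod_insert hiJ']
    simp only [Finset.prod_mul_distrib]
    ring
  rw [h1]
  -- each factor of the first product
  have hfac : ∀ j ∈ J', ((-1 : ℤ) ^ (J.card - 1) * sgn j (J \ {i}) *
      ((-1 : ℤ) ^ J.card * sgn j J)) = if i < j then 1 else -1 := by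
    intro j hj
    have hij : i ≠ j := fun h => hiJ' (h ▸ hj)
    have hfilt : (J \ {i}).filter (fun k => k < j) = (J.filter (fun k => k < j)) \ {i} := by
      ext k
      simp only [Finset.mem_filter, Finset.mem_sdiff, Finset.mem_singleton]
      tauto
    have hpow : ((-1 : ℤ)) ^ (J.card - 1) * ((-1 : ℤ)) ^ J.card = -1 := by
      rw [← pow_add]
      have : (J.card - 1 + J.card) % 2 = 1 % 2 := by omega
      rw [negpow_congr _ 1 this, pow_one]
    by_cases hlt : i < j
    · -- i ∈ filter, so card drops by 1
      have hmem : i ∈ J.filter (fun k => k < j) := Finset.mem_filter.mpr ⟨hiJ, hlt⟩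
      have hc : 1 ≤ (J.filter (fun k => k < j)).card := Finset.card_pos.mpr ⟨i, hmem⟩
      have hcard2 : ((J \ {i}).filter (fun k => k < j)).card =
          (J.filter (fun k => k < j)).card - 1 := by
        rw [hfilt, ← Finset.erase_eq, Finset.card_erase_of_mem hmem]
      simp only [sgn, hcard2, if_pos hlt]
      calc ((-1 : ℤ)) ^ (J.card - 1) * (-1) ^ ((J.filter (fun k => k < j)).card - 1) *
            ((-1) ^ J.card * (-1) ^ (J.filter (fun k => k < j)).card)
          = ((-1 : ℤ)) ^ (J.card - 1) * (-1) ^ J.card *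
            ((-1) ^ ((J.filter (fun k => k < j)).card - 1) *
              (-1) ^ (J.filter (fun k => k < j)).card) := by ring
        _ = 1 := by
            rw [hpow, ← pow_add]
            have : ((J.filter (fun k => k < j)).card - 1 +
                (J.filter (fun k => k < j)).card) % 2 = 1 % 2 := by omega
            rw [negpow_congr _ 1 this, pow_one]; ring
    · have hmem : i ∉ J.filter (fun k => k < j) := by
        simp [hlt]
      have hcard2 : ((J \ {i}).filter (fun k => k < j)).card =
          (J.filter (fun k => k < j)).card := by
        rw [hfilt, ← Finset.erase_eq, Finset.erase_eq_of_notMem hmem]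
      simp only [sgn, hcard2, if_neg hlt]
      calc ((-1 : ℤ)) ^ (J.card - 1) * (-1) ^ ((J.filter (fun k => k < j)).card) *
            ((-1) ^ J.card * (-1) ^ (J.filter (fun k => k < j)).card)
          = ((-1 : ℤ)) ^ (J.card - 1) * (-1) ^ J.card *
            ((-1) ^ ((J.filter (fun k => k < j)).card) *
              (-1) ^ (J.filter (fun k => k < j)).card) := by ring
        _ = -1 := by
            rw [hpow, ← pow_add, ← two_mul, pow_mul]
            norm_num
  rw [Finset.prod_congr rfl hfac]
  -- evaluate the product of ifs
  have hprod : (∏ j ∈ J', (if i < j then (1 : ℤ) else -1)) =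
      (-1 : ℤ) ^ (J'.filter (fun j => j < i)).card := by
    rw [Finset.prod_ite, Finset.prod_const_one, one_mul, Finset.prod_const]
    congr 1
    congr 1
    apply Finset.filter_congr
    intro j hj
    have hij : i ≠ j := fun h => hiJ' (h ▸ hj)
    simp only [not_lt]
    constructor
    · intro h; exact lt_of_le_of_ne h (fun h' => hij h'.symm)
    · intro h; exact le_of_lt h
  rw [hprod]
  -- final counting
  have hfsub : J'.filter (fun j => j < i) ⊆ J.filter (fun j => j < i) :=
    Finset.filter_subset_filter _ hsub
  have hsd : (J \ J').filter (fun j => j < i) =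
      (J.filter (fun j => j < i)) \ (J'.filter (fun j => j < i)) := by
    ext k
    simp only [Finset.mem_filter, Finset.mem_sdiff]
    tauto
  have hcsd : ((J \ J').filter (fun j => j < i)).card =
      (J.filter (fun j => j < i)).card - (J'.filter (fun j => j < i)).card := by
    rw [hsd, Finset.card_sdiff_of_subset hfsub]
  have hle : (J'.filter (fun j => j < i)).card ≤ (J.filter (fun j => j < i)).card :=
    Finset.card_le_card hfsub
  simp only [sgn, hcsd]
  have : ((-1 : ℤ)) ^ (J'.filter (fun j => j < i)).card *
      (-1) ^ (J.filter (fun j => j < i)).card =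
      (-1) ^ ((J.filter (fun j => j < i)).card - (J'.filter (fun j => j < i)).card) := by
    rw [← pow_add]
    apply negpow_congr
    omega
  rw [← this]
  ring
end
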